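/- For pointed topological spaces $A$, $B$, $Y$, there is a homeomorphism between the right half-smash $(A\vee B)\rtimes Y$ and the wedge $(A\rtimes Y)\vee(B\rtimes Y)$, where the wedge point of $A\vee B$ is the common basepoint. -/

import Mathlib

/-!
Both spaces are quotients of `(A ⊕ B) × Y ≅ (A × Y) ⊕ (B × Y)` by the relation
collapsing `{inl a₀, inr b₀} × Y` to a point, so the evident maps in either direction are
mutually inverse. The only subtle point is continuity of `(A ∨ B) ⋊ Y → (A ⋊ Y) ∨ (B ⋊ Y)`:
the product of a quotient map with `id_Y` need not be a quotient map, but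
`(A ⊕ B) × Y → (A ∨ B) × Y` is one, because the wedge identifies points only within the
finite set `{inl a₀, inr b₀}`.
-/

noncomputable section

/-- The relation generating the wedge `A ∨ B`: identify the two basepoints. -/
def WedgeRel {A B : Type} (a0 : A) (b0 : B) : A ⊕ B → A ⊕ B → Prop := fun x y =>
  x = Sum.inl a0 ∧ y = Sum.inr b0

/-- The wedge sum `A ∨ B` of two pointed spaces. -/
def Wedge (A B : Type) [TopologicalSpace A] [TopologicalSpace B] (a0 : A) (b0 : B) : Type :=
  Quot (WedgeRel a0 b0)

instance {A B : Type} [TopologicalSpace A] [TopologicalSpace B] (a0 : A) (b0 : B) :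
    TopologicalSpace (Wedge A B a0 b0) :=
  inferInstanceAs (TopologicalSpace (Quot (WedgeRel a0 b0)))

/-- The basepoint of the wedge `A ∨ B`. -/
def wedgePt {A B : Type} [TopologicalSpace A] [TopologicalSpace B] (a0 : A) (b0 : B) :
    Wedge A B a0 b0 :=
  Quot.mk _ (Sum.inl a0)

/-- The relation generating the right half-smash `A ⋊ Y`: collapse `{a₀} × Y` to a point. -/
def HalfSmashRel {A Y : Type} (a0 : A) : A × Y → A × Y → Prop := fun p q =>
  p.1 = a0 ∧ q.1 = a0

/-- The right half-smash `A ⋊ Y = (A × Y)/({a₀} × Y)`. -/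
def HalfSmash (A Y : Type) [TopologicalSpace A] [TopologicalSpace Y] (a0 : A) : Type :=
  Quot (HalfSmashRel (Y := Y) a0)

instance {A Y : Type} [TopologicalSpace A] [TopologicalSpace Y] (a0 : A) :
    TopologicalSpace (HalfSmash A Y a0) :=
  inferInstanceAs (TopologicalSpace (Quot (HalfSmashRel (Y := Y) a0)))

/-- The basepoint of the right half-smash: the collapsed copy of `{a₀} × Y`. -/
def halfSmashPt {A Y : Type} [TopologicalSpace A] [TopologicalSpace Y] (a0 : A) (y0 : Y) :
    HalfSmash A Y a0 :=
  Quot.mk _ (a0, y0)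

open Topology Function Set

/-- Around a point `(x, y)` of a saturated open set `W`, a box around `(x, y)` together with
boxes around the finitely many `(s, y) ∈ W` with `s ∈ S` give a saturated box; finiteness of `S`
keeps the intersection of their `Y`-sides open. -/
theorem Topology.IsQuotientMap.prodMap_id_of_finite {X Z Y : Type*} [TopologicalSpace X]
    [TopologicalSpace Z] [TopologicalSpace Y] {q : X → Z} (hq : IsQuotientMap q) {S : Set X}
    (hS : S.Finite) (hqS : ∀ x x', q x = q x' → x ≠ x' → x ∈ S) :
    IsQuotientMap (Prod.map q (id : Y → Y)) := by
  refine ⟨.of_isOpen_preimage_iff_isOpen fun V => ⟨fun hW => ?_, fun hV =>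
    hV.preimage (hq.continuous.prodMap continuous_id)⟩, hq.surjective.prodMap surjective_id⟩
  set W := Prod.map q id ⁻¹' V
  refine isOpen_iff_forall_mem_open.mpr fun ⟨z, y⟩ hzy => ?_
  obtain ⟨x, rfl⟩ := hq.surjective z
  set T := insert x {s ∈ S | (s, y) ∈ W}
  have hT : ∀ t ∈ T, (t, y) ∈ W := by
    rintro t (rfl | ⟨-, ht⟩)
    exacts [hzy, ht]
  choose! U O hU hO htU hyO hUO using fun t (ht : t ∈ T) => isOpen_prod_iff.mp hW t y (hT t ht)
  have hTfin : T.Finite := (hS.subset fun _ h => h.1).insert x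
  set U' := ⋃ t ∈ T, U t
  have hU'sat : q ⁻¹' (q '' U') = U' := by
    refine Subset.antisymm ?_ (subset_preimage_image q U')
    rintro a ⟨a', ha', hqa⟩
    obtain ⟨t, ht, ha't⟩ := mem_iUnion₂.mp ha'
    have haW : (a, y) ∈ W := by
      have ha'W : (q a', y) ∈ V := hUO t ht (mk_mem_prod ha't (hyO t ht))
      rwa [hqa] at ha'W
    by_cases haa : a = a'
    · exact haa ▸ ha'
    · have haT : a ∈ T := Or.inr ⟨hqS a a' hqa.symm haa, haW⟩
      exact mem_biUnion haT (htU a haT)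
  refine ⟨(q '' U') ×ˢ ⋂ t ∈ T, O t, ?_, ?_, ?_⟩
  · rintro ⟨_, y'⟩ ⟨⟨a, ha, rfl⟩, hy'⟩
    obtain ⟨t, ht, hat⟩ := mem_iUnion₂.mp ha
    exact hUO t ht (mk_mem_prod hat (mem_iInter₂.mp hy' t ht))
  · refine (hq.isOpen_preimage.mp ?_).prod (hTfin.isOpen_biInter hO)
    rw [hU'sat]
    exact isOpen_biUnion hU
  · exact ⟨mem_image_of_mem q (mem_biUnion (mem_insert x _) (htU x (mem_insert x _))),
      mem_iInter₂.mpr hyO⟩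

namespace Wedge

variable {A B : Type} [TopologicalSpace A] [TopologicalSpace B] (a0 : A) (b0 : B)

def mk : A ⊕ B → Wedge A B a0 b0 := Quot.mk _

theorem isQuotientMap_mk : IsQuotientMap (mk a0 b0) := isQuotientMap_quot_mk

theorem mk_inl_eq_mk_inr : mk a0 b0 (.inl a0) = mk a0 b0 (.inr b0) := Quot.sound ⟨rfl, rfl⟩

theorem eq_or_mem_of_mk_eq_mk {x x' : A ⊕ B} (h : mk a0 b0 x = mk a0 b0 x') :
    x = x' ∨
      x ∈ ({.inl a0, .inr b0} : Set (A ⊕ B)) ∧ x' ∈ ({.inl a0, .inr b0} : Set (A ⊕ B)) := by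
  have hr := Quot.eqvGen_exact h
  clear h
  induction hr with
  | rel _ _ h => exact .inr ⟨.inl h.1, .inr h.2⟩
  | refl => exact .inl rfl
  | symm _ _ _ ih =>
    rcases ih with rfl | ⟨h, h'⟩
    exacts [.inl rfl, .inr ⟨h', h⟩]
  | trans _ _ _ _ _ ih ih' =>
    rcases ih with rfl | ⟨h, h₂⟩
    · exact ih'
    rcases ih' with rfl | ⟨-, h'⟩
    exacts [.inr ⟨h, h₂⟩, .inr ⟨h, h'⟩]

end Wedge

namespace HalfSmash

variable {A B Y : Type} [TopologicalSpace A] [TopologicalSpace B] [TopologicalSpace Y]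

def mk (a0 : A) : A × Y → HalfSmash A Y a0 := Quot.mk _

theorem isQuotientMap_mk (a0 : A) : IsQuotientMap (mk (Y := Y) a0) := isQuotientMap_quot_mk

theorem mk_base_eq (a0 : A) (y y' : Y) : mk a0 (a0, y) = mk a0 (a0, y') := Quot.sound ⟨rfl, rfl⟩

def map {A' : Type} [TopologicalSpace A'] {a0 : A} {a0' : A'} (f : A → A') (hf : f a0 = a0') :
    HalfSmash A Y a0 → HalfSmash A' Y a0' :=
  Quot.lift (fun p => mk a0' (f p.1, p.2)) fun p p' ⟨hp, hp'⟩ => by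
    rw [hp, hp', hf]
    exact mk_base_eq a0' p.2 p'.2

theorem continuous_map {A' : Type} [TopologicalSpace A'] {a0 : A} {a0' : A'} {f : A → A'}
    (hf : Continuous f) (hfa : f a0 = a0') : Continuous (map (Y := Y) f hfa) :=
  continuous_quot_lift _ <| (isQuotientMap_mk a0').continuous.comp (hf.prodMap continuous_id)

variable (a0 : A) (b0 : B) (y0 : Y)

def mkWedge : (A ⊕ B) × Y → HalfSmash (Wedge A B a0 b0) Y (wedgePt a0 b0) :=
  mk _ ∘ Prod.map (Wedge.mk a0 b0) id

theorem isQuotientMap_mkWedge : IsQuotientMap (mkWedge (Y := Y) a0 b0) :=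
  (isQuotientMap_mk _).comp <| (Wedge.isQuotientMap_mk a0 b0).prodMap_id_of_finite
    (toFinite {.inl a0, .inr b0}) fun _ _ h hne =>
      ((Wedge.eq_or_mem_of_mk_eq_mk a0 b0 h).resolve_left hne).1

def mkWedgeOfHalfSmash : (A ⊕ B) × Y →
    Wedge (HalfSmash A Y a0) (HalfSmash B Y b0) (halfSmashPt a0 y0) (halfSmashPt b0 y0) :=
  Wedge.mk _ _ ∘ Sum.map (mk a0) (mk b0) ∘ Homeomorph.sumProdDistrib

theorem continuous_mkWedgeOfHalfSmash : Continuous (mkWedgeOfHalfSmash a0 b0 y0) :=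
  (Wedge.isQuotientMap_mk _ _).continuous.comp <|
    ((isQuotientMap_mk a0).continuous.sumMap (isQuotientMap_mk b0).continuous).comp
      Homeomorph.sumProdDistrib.continuous

theorem mkWedgeOfHalfSmash_inl_base (y : Y) :
    mkWedgeOfHalfSmash a0 b0 y0 (.inl a0, y) = wedgePt _ _ :=
  congrArg (Wedge.mk _ _ ∘ Sum.inl) (mk_base_eq a0 y y0)

theorem mkWedgeOfHalfSmash_inr_base (y : Y) :
    mkWedgeOfHalfSmash a0 b0 y0 (.inr b0, y) = wedgePt _ _ :=
  (congrArg (Wedge.mk _ _ ∘ Sum.inr) (mk_base_eq b0 y y0)).trans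
    (Wedge.mk_inl_eq_mk_inr _ _).symm

def toWedge : HalfSmash (Wedge A B a0 b0) Y (wedgePt a0 b0) →
    Wedge (HalfSmash A Y a0) (HalfSmash B Y b0) (halfSmashPt a0 y0) (halfSmashPt b0 y0) :=
  Quot.lift
    (fun p => Quot.lift (fun x => mkWedgeOfHalfSmash a0 b0 y0 (x, p.2))
      (fun _ _ ⟨hx, hx'⟩ => by
        rw [hx, hx', mkWedgeOfHalfSmash_inl_base, mkWedgeOfHalfSmash_inr_base]) p.1)
    (fun ⟨_, y⟩ ⟨_, y'⟩ ⟨hp, hp'⟩ => by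
      dsimp only at hp hp'
      rw [hp, hp']
      exact (mkWedgeOfHalfSmash_inl_base a0 b0 y0 y).trans
        (mkWedgeOfHalfSmash_inl_base a0 b0 y0 y').symm)

def ofWedge :
    Wedge (HalfSmash A Y a0) (HalfSmash B Y b0) (halfSmashPt a0 y0) (halfSmashPt b0 y0) →
      HalfSmash (Wedge A B a0 b0) Y (wedgePt a0 b0) :=
  Quot.lift
    (Sum.elim (map (Wedge.mk a0 b0 ∘ .inl) rfl)
      (map (Wedge.mk a0 b0 ∘ .inr) (Wedge.mk_inl_eq_mk_inr a0 b0).symm))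
    (fun _ _ ⟨hx, hx'⟩ => by
      rw [hx, hx']
      exact congrArg (fun w => mk _ (w, y0)) (Wedge.mk_inl_eq_mk_inr a0 b0))

theorem continuous_toWedge : Continuous (toWedge a0 b0 y0) :=
  (isQuotientMap_mkWedge a0 b0).continuous_iff.mpr (continuous_mkWedgeOfHalfSmash a0 b0 y0)

theorem continuous_ofWedge : Continuous (ofWedge a0 b0 y0) :=
  continuous_quot_lift _ <|
    (continuous_map ((Wedge.isQuotientMap_mk a0 b0).continuous.comp continuous_inl) _).sumElim
      (continuous_map ((Wedge.isQuotientMap_mk a0 b0).continuous.comp continuous_inr) _)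

theorem ofWedge_toWedge (l : HalfSmash (Wedge A B a0 b0) Y (wedgePt a0 b0)) :
    ofWedge a0 b0 y0 (toWedge a0 b0 y0 l) = l := by
  obtain ⟨⟨x, y⟩, rfl⟩ := (isQuotientMap_mkWedge a0 b0).surjective l
  cases x <;> rfl

theorem toWedge_ofWedge
    (r : Wedge (HalfSmash A Y a0) (HalfSmash B Y b0) (halfSmashPt a0 y0) (halfSmashPt b0 y0)) :
    toWedge a0 b0 y0 (ofWedge a0 b0 y0 r) = r := by
  obtain ⟨l | l, rfl⟩ := (Wedge.isQuotientMap_mk _ _).surjective r <;>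
  · obtain ⟨p, rfl⟩ := (isQuotientMap_mk _).surjective l
    rfl

def wedgeDistrib : HalfSmash (Wedge A B a0 b0) Y (wedgePt a0 b0) ≃ₜ
    Wedge (HalfSmash A Y a0) (HalfSmash B Y b0) (halfSmashPt a0 y0) (halfSmashPt b0 y0) where
  toFun := toWedge a0 b0 y0
  invFun := ofWedge a0 b0 y0
  left_inv := ofWedge_toWedge a0 b0 y0
  right_inv := toWedge_ofWedge a0 b0 y0
  continuous_toFun := continuous_toWedge a0 b0 y0
  continuous_invFun := continuous_ofWedge a0 b0 y0

end HalfSmash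

/-- `(A ∨ B) ⋊ Y` is homeomorphic to `(A ⋊ Y) ∨ (B ⋊ Y)`. -/
theorem halfSmash_wedge_homeomorph (A B Y : Type)
    [TopologicalSpace A] [TopologicalSpace B] [TopologicalSpace Y]
    (a0 : A) (b0 : B) (y0 : Y) :
    Nonempty
      ((HalfSmash (Wedge A B a0 b0) Y (wedgePt a0 b0)) ≃ₜ
        (Wedge (HalfSmash A Y a0) (HalfSmash B Y b0) (halfSmashPt a0 y0) (halfSmashPt b0 y0))) :=
  ⟨HalfSmash.wedgeDistrib a0 b0 y0⟩
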